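/- arXiv:2103.12885 — 7 statements merged into one kernel-verified Lean document; each statement's English description precedes it below -/
import Mathlib

section
/- Let B be an n×n complex matrix and suppose the pencil L_B(t) is isospectral, i.e. the characteristic polynomial of L_B(t) is independent of t ∈ ℝ. Then for all integers k, l with 1 ≤ k ≤ n and 0 ≤ l < k/2 (i.e. 2l < k), the sum over all words w : Fin k → Bool with exactly l entries equal to true of Tr(w(B,Bᴴ)) equals 0. -/
open Matrix

/-- The Hermitian part `Re B = (B + Bᴴ)/2`. -/
noncomputable def reM {n : ℕ} (B : Matrix (Fin n) (Fin n) ℂ) : Matrix (Fin n) (Fin n) ℂ :=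
  (1 / 2 : ℂ) • (B + Bᴴ)

/-- The skew part `Im B = (B - Bᴴ)/(2i)`. -/
noncomputable def imM {n : ℕ} (B : Matrix (Fin n) (Fin n) ℂ) : Matrix (Fin n) (Fin n) ℂ :=
  (1 / (2 * Complex.I) : ℂ) • (B - Bᴴ)

/-- The pencil `L_B(t) = cos t ⬝ Re B + sin t ⬝ Im B = Re(e^{-it} B)`. -/
noncomputable def LB {n : ℕ} (B : Matrix (Fin n) (Fin n) ℂ) (t : ℝ) :
    Matrix (Fin n) (Fin n) ℂ :=
  (Real.cos t : ℂ) • reM B + (Real.sin t : ℂ) • imM B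

/-- The pencil `L_B(t)` is isospectral: its characteristic polynomial is
independent of `t`. -/
def Isospectral {n : ℕ} (B : Matrix (Fin n) (Fin n) ℂ) : Prop :=
  ∀ s t : ℝ, (LB B s).charpoly = (LB B t).charpoly

/-- The word `w(B, Bᴴ)`: the ordered product over `j = 0, …, k-1` of `Bᴴ` if `w j = true`
and `B` otherwise. -/
noncomputable def wordProd {n : ℕ} (B : Matrix (Fin n) (Fin n) ℂ) {k : ℕ}
    (w : Fin k → Bool) : Matrix (Fin n) (Fin n) ℂ :=
  (List.ofFn fun j => if w j then Bᴴ else B).prod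


/-!
`L_B(t)` is Hermitian, so `tr L_B(t)^k` is a function of its characteristic polynomial and hence
does not depend on `t`. Since `2 e^{it} L_B(t) = B + e^{2it} Bᴴ`, the polynomial
`P(z) = ∑_w tr(w(B, Bᴴ)) z^{#Bᴴ in w}` satisfies `P(u²) = (2u)^k tr L_B(0)^k` on the unit circle,
so `P(X²) = c X^k`. The coefficient of `X^{2l}`, which is the word trace sum for `l`, therefore
vanishes when `2l < k`.
-/

open Finset Polynomial

theorem add_smul_pow_eq_sum_words {R A : Type*} [CommSemiring R] [Semiring A] [Algebra R A]
    (x y : A) (z : R) (k : ℕ) :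
    (x + z • y) ^ k = ∑ w : Fin k → Bool,
      z ^ #{j | w j = true} • (List.ofFn fun j => if w j then y else x).prod := by
  induction k with
  | zero => simp
  | succ k ih =>
    have hcount (b : Bool) (w : Fin k → Bool) :
        #{j | Fin.consEquiv (fun _ => Bool) (b, w) j = true} =
          #{j | w j = true} + (if b then 1 else 0) := by
      simp [Fin.card_filter_univ_succ', add_comm]
    have hword (b : Bool) (w : Fin k → Bool) :
        (List.ofFn fun j => if Fin.consEquiv (fun _ => Bool) (b, w) j then y else x).prod =
          (if b then y else x) * (List.ofFn fun j => if w j then y else x).prod := by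
      simp [List.ofFn_succ]
    rw [pow_succ', ih, ← (Fin.consEquiv fun _ => Bool).sum_comp, Fintype.sum_prod_type,
      Fintype.sum_bool, add_comm]
    simp only [hcount, hword]
    simp [add_mul, mul_sum, sum_add_distrib, pow_succ, smul_smul]

theorem Matrix.IsHermitian.trace_pow_eq_sum_roots_charpoly {𝕜 ι : Type*} [RCLike 𝕜] [Fintype ι]
    [DecidableEq ι] {A : Matrix ι ι 𝕜} (hA : A.IsHermitian) (k : ℕ) :
    (A ^ k).trace = (A.charpoly.roots.map (· ^ k)).sum := by
  conv_lhs => rw [hA.spectral_theorem, ← map_pow, Unitary.conjStarAlgAut_apply, trace_mul_cycle,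
    Unitary.coe_star_mul_self, one_mul, diagonal_pow, trace_diagonal]
  simp [hA.roots_charpoly_eq_eigenvalues]

theorem Polynomial.eq_of_eval_exp_mul_I_eq {p q : ℂ[X]}
    (h : ∀ t : ℝ, p.eval (Complex.exp (t * Complex.I)) = q.eval (Complex.exp (t * Complex.I))) :
    p = q := by
  have hsphere : (Metric.sphere (0 : ℂ) 1).Infinite :=
    (isConnected_sphere (by simp [Complex.rank_real_complex]) 0 zero_le_one).isPreconnected
      |>.infinite_of_nontrivial ⟨1, by simp, -1, by simp, by norm_num⟩
  refine eq_of_infinite_eval_eq p q (hsphere.mono fun z hz => ?_)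
  have hz : Complex.exp (z.arg * Complex.I) = z := by
    simpa [mem_sphere_zero_iff_norm.mp hz] using Complex.norm_mul_exp_arg_mul_I z
  simpa [hz] using h z.arg

section Pencil

variable {n : ℕ} (B : Matrix (Fin n) (Fin n) ℂ)

theorem reM_isHermitian : (reM B).IsHermitian := by
  simp [reM, IsHermitian, conjTranspose_smul, add_comm]

theorem imM_isHermitian : (imM B).IsHermitian := by
  have hstar : star (1 / (2 * Complex.I)) = -(1 / (2 * Complex.I)) := by
    simp [Complex.conj_I]
  rw [IsHermitian, imM, conjTranspose_smul, conjTranspose_sub, conjTranspose_conjTranspose, hstar,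
    neg_smul, ← smul_neg, neg_sub]

theorem LB_isHermitian (t : ℝ) : (LB B t).IsHermitian :=
  ((reM_isHermitian B).smul (Complex.conj_ofReal _)).add
    ((imM_isHermitian B).smul (Complex.conj_ofReal _))

theorem two_exp_mul_I_smul_LB (t : ℝ) :
    (2 * Complex.exp (t * Complex.I)) • LB B t = B + Complex.exp (t * Complex.I) ^ 2 • Bᴴ := by
  rw [LB, reM, imM, Complex.exp_mul_I]
  match_scalars
  · field_simp
    linear_combination Complex.I * Complex.cos_sq_add_sin_sq (t : ℂ) +
      Complex.cos t * Complex.sin t * Complex.I_sq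
  · field_simp
    linear_combination
      -(Complex.cos t + Complex.sin t * Complex.I) * Complex.sin t * Complex.I_sq

noncomputable def wordPoly (k : ℕ) : ℂ[X] :=
  ∑ w : Fin k → Bool, C (wordProd B w).trace * X ^ #{j | w j = true}

theorem eval_wordPoly (k : ℕ) (z : ℂ) : (wordPoly B k).eval z = ((B + z • Bᴴ) ^ k).trace := by
  rw [add_smul_pow_eq_sum_words, trace_sum, wordPoly, eval_finsetSum]
  refine sum_congr rfl fun w _ => ?_
  rw [eval_C_mul, eval_X_pow, trace_smul, smul_eq_mul, mul_comm, wordProd]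

theorem coeff_wordPoly (k l : ℕ) :
    (wordPoly B k).coeff l =
      ∑ w : Fin k → Bool with #{j | w j = true} = l, (wordProd B w).trace := by
  simp only [wordPoly, finsetSum_coeff, coeff_C_mul_X_pow, sum_filter]
  exact sum_congr rfl fun w _ => if_congr eq_comm rfl rfl

end Pencil

theorem Isospectral.trace_pow_LB_eq {n : ℕ} {B : Matrix (Fin n) (Fin n) ℂ} (h : Isospectral B)
    (k : ℕ) (t : ℝ) : (LB B t ^ k).trace = (LB B 0 ^ k).trace := by
  rw [(LB_isHermitian B t).trace_pow_eq_sum_roots_charpoly,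
    (LB_isHermitian B 0).trace_pow_eq_sum_roots_charpoly, h]

theorem Isospectral.expand_wordPoly {n : ℕ} {B : Matrix (Fin n) (Fin n) ℂ} (h : Isospectral B)
    (k : ℕ) : expand ℂ 2 (wordPoly B k) = C (2 ^ k * (LB B 0 ^ k).trace) * X ^ k := by
  refine eq_of_eval_exp_mul_I_eq fun t => ?_
  rw [expand_eval, eval_wordPoly, ← two_exp_mul_I_smul_LB, _root_.smul_pow, trace_smul,
    h.trace_pow_LB_eq, eval_C_mul, eval_X_pow, smul_eq_mul]
  ring

/-- isospectrality implies the vanishing of the sums of traces of words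
with `l` appearances of `Bᴴ` among `k` letters, whenever `2l < k ≤ n`. -/
theorem isospectral_implies_word_trace_sums_zero (n : ℕ) (B : Matrix (Fin n) (Fin n) ℂ)
    (h : Isospectral B) :
    ∀ k l : ℕ, 1 ≤ k → k ≤ n → 2 * l < k →
      ∑ w ∈ Finset.univ.filter
          (fun w : Fin k → Bool => (Finset.univ.filter fun j => w j = true).card = l),
        (wordProd B w).trace = 0 := by
  intro k l _ _ hl
  rw [← coeff_wordPoly, ← coeff_expand_mul' two_pos, h.expand_wordPoly, coeff_C_mul_X_pow,
    if_neg hl.ne]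
end

section
/- Let B be an n×n complex matrix and suppose the pencil L_B(t) is isospectral, i.e. the characteristic polynomial of L_B(t) is independent of t ∈ ℝ. Then B is nilpotent (B^n = 0). -/
open Matrix

open Polynomial

-- eval of charpoly
lemma eval_charpoly' {n : ℕ} (M : Matrix (Fin n) (Fin n) ℂ) (x : ℂ) :
    M.charpoly.eval x = (x • (1 : Matrix (Fin n) (Fin n) ℂ) - M).det := by
  rw [Matrix.charpoly, ← Polynomial.coe_evalRingHom, RingHom.map_det]
  congr 1
  ext i j
  by_cases hij : i = j <;>
    simp [hij, Matrix.charmatrix_apply, Matrix.one_apply, Matrix.diagonal, Matrix.smul_apply,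
      Matrix.sub_apply, Matrix.of_apply]

-- LB as combination of exponentials
lemma LB_eq {n : ℕ} (B : Matrix (Fin n) (Fin n) ℂ) (t : ℝ) :
    LB B t = (1/2 : ℂ) • (Complex.exp (-(t : ℂ) * Complex.I) • B
      + Complex.exp ((t : ℂ) * Complex.I) • Bᴴ) := by
  ext i j
  simp only [LB, reM, imM, Matrix.add_apply, Matrix.smul_apply, Matrix.sub_apply, smul_eq_mul]
  rw [Complex.exp_mul_I, Complex.exp_mul_I, Complex.cos_neg, Complex.sin_neg,
    ← Complex.ofReal_cos, ← Complex.ofReal_sin]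
  have hI : Complex.I ≠ 0 := Complex.I_ne_zero
  field_simp
  ring_nf
  simp [Complex.I_sq]
  ring

-- scaling identity (2)
lemma det_scale {n : ℕ} (B : Matrix (Fin n) (Fin n) ℂ) (t : ℝ) (x : ℂ) :
    ((x * Complex.exp ((t:ℂ) * Complex.I)) • (1 : Matrix (Fin n) (Fin n) ℂ)
      - (1/2 : ℂ) • (B + (Complex.exp ((t:ℂ) * Complex.I))^2 • Bᴴ)).det
    = (Complex.exp ((t:ℂ) * Complex.I))^n
        * (x • (1 : Matrix (Fin n) (Fin n) ℂ) - LB B t).det := by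
  set e := Complex.exp ((t:ℂ) * Complex.I) with he
  have hmul : e * Complex.exp (-(t:ℂ) * Complex.I) = 1 := by
    rw [he, ← Complex.exp_add]; ring_nf; exact Complex.exp_zero
  have hmat : (x * e) • (1 : Matrix (Fin n) (Fin n) ℂ)
      - (1/2 : ℂ) • (B + e^2 • Bᴴ)
      = e • (x • (1 : Matrix (Fin n) (Fin n) ℂ) - LB B t) := by
    rw [LB_eq]
    ext i j
    simp only [Matrix.sub_apply, Matrix.smul_apply, Matrix.add_apply, Matrix.one_apply,
      smul_eq_mul]
    linear_combination ((1/2 : ℂ) * B i j) * hmul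
  rw [hmat, Matrix.det_smul, Fintype.card_fin]

-- the polynomial P and its evaluation
noncomputable def Ppoly {n : ℕ} (B : Matrix (Fin n) (Fin n) ℂ) (s : ℂ) : Polynomial ℂ :=
  ((C (2*s)) • (1 : Matrix (Fin n) (Fin n) (Polynomial ℂ))
    - (C (1/2 : ℂ)) • (B.map C + (X : Polynomial ℂ)^2 • Bᴴ.map C)).det

lemma eval_Ppoly {n : ℕ} (B : Matrix (Fin n) (Fin n) ℂ) (s u : ℂ) :
    (Ppoly B s).eval u = ((2*s) • (1 : Matrix (Fin n) (Fin n) ℂ)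
      - (1/2 : ℂ) • (B + u^2 • Bᴴ)).det := by
  rw [Ppoly, ← Polynomial.coe_evalRingHom, RingHom.map_det]
  congr 1
  ext i j
  by_cases hij : i = j <;>
    · simp only [RingHom.mapMatrix_apply, Matrix.map_apply, Matrix.sub_apply, Matrix.smul_apply,
        Matrix.add_apply, Matrix.one_apply, hij, if_true, if_false, smul_eq_mul]
      simp [hij, Matrix.one_apply]
      ring

lemma circle_infinite :
    Set.Infinite ((fun t : ℝ => Complex.exp ((t:ℂ) * Complex.I)) '' Set.Ioo 0 1) := by
  apply Set.Infinite.image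
  · intro a ha b hb hab
    have ha' : (a:ℝ) ∈ Set.Icc 0 Real.pi :=
      ⟨le_of_lt ha.1, le_trans (le_of_lt ha.2) (by linarith [Real.pi_gt_three])⟩
    have hb' : (b:ℝ) ∈ Set.Icc 0 Real.pi :=
      ⟨le_of_lt hb.1, le_trans (le_of_lt hb.2) (by linarith [Real.pi_gt_three])⟩
    have hre : Real.cos a = Real.cos b := by
      have := congrArg Complex.re hab
      simpa [Complex.exp_ofReal_mul_I_re] using this
    exact Real.injOn_cos ha' hb' hre
  · exact Set.Ioo_infinite (by norm_num)


/-- isospectrality of the pencil implies that `B` is nilpotent. -/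
theorem isospectral_implies_nilpotent (n : ℕ) (B : Matrix (Fin n) (Fin n) ℂ)
    (h : Isospectral B) : B ^ n = 0 := by
  rcases Nat.eq_zero_or_pos n with rfl | hn
  · exact Subsingleton.elim _ _
  -- notation
  set cP : Polynomial ℂ := (reM B).charpoly with hcP
  have hLB0 : LB B 0 = reM B := by
    simp [LB]
  have hdeg : cP.natDegree = n := by
    rw [hcP, Matrix.charpoly_natDegree_eq_dim, Fintype.card_fin]
  -- key determinant identity for all s
  have key : ∀ s : ℂ, ((2*s) • (1 : Matrix (Fin n) (Fin n) ℂ) - (1/2 : ℂ) • B).det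
      = (2*s)^n := by
    intro s
    set Q : Polynomial ℂ :=
      ∑ j ∈ Finset.range (n+1), C (cP.coeff j * (2*s)^j) * X^(n - j) with hQ
    have hPQ : Ppoly B s = Q := by
      apply Polynomial.eq_of_infinite_eval_eq
      apply Set.Infinite.mono _ circle_infinite
      rintro - ⟨t, -, rfl⟩
      set u : ℂ := Complex.exp ((t:ℂ) * Complex.I) with hu
      have hu0 : u ≠ 0 := Complex.exp_ne_zero _
      have hx : (2*s/u) * u = 2*s := div_mul_cancel₀ _ hu0
      have step1 : (Ppoly B s).eval u = u^n * ((2*s/u) • (1 : Matrix (Fin n) (Fin n) ℂ)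
          - LB B t).det := by
        rw [eval_Ppoly]
        conv_lhs => rw [← hx]
        have := det_scale B t (2*s/u)
        rw [← hu] at this
        exact this
      have step2 : ((2*s/u) • (1 : Matrix (Fin n) (Fin n) ℂ) - LB B t).det
          = cP.eval (2*s/u) := by
        rw [← eval_charpoly']
        rw [h t 0, hLB0]
      rw [Set.mem_setOf_eq, step1, step2, Polynomial.eval_eq_sum_range, hdeg, hQ]
      rw [Finset.mul_sum]
      simp only [Polynomial.eval_finset_sum, Polynomial.eval_mul, Polynomial.eval_C,
        Polynomial.eval_pow, Polynomial.eval_X]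
      apply Finset.sum_congr rfl
      intro j hj
      have hjn : j ≤ n := Nat.lt_succ_iff.mp (Finset.mem_range.mp hj)
      have hpow : u ^ n = u ^ j * u ^ (n - j) := by
        rw [← pow_add, Nat.add_sub_cancel' hjn]
      rw [hpow]
      have : (2*s/u)^j * u^j = (2*s)^j := by
        rw [← mul_pow, hx]
      calc u ^ j * u ^ (n-j) * (cP.coeff j * (2*s/u)^j)
          = cP.coeff j * ((2*s/u)^j * u^j) * u^(n-j) := by ring
        _ = cP.coeff j * (2*s)^j * u^(n-j) := by rw [this]
    -- evaluate at 0
    have h0 : (Ppoly B s).eval 0 = ((2*s) • (1 : Matrix (Fin n) (Fin n) ℂ)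
        - (1/2 : ℂ) • B).det := by
      rw [eval_Ppoly]
      norm_num
    have h0' : Q.eval 0 = (2*s)^n := by
      rw [hQ]
      simp only [Polynomial.eval_finset_sum, Polynomial.eval_mul, Polynomial.eval_C,
        Polynomial.eval_pow, Polynomial.eval_X]
      rw [Finset.sum_eq_single n]
      · have hcoeff : cP.coeff n = 1 := by
          have := (reM B).charpoly_monic
          rw [Polynomial.Monic, Polynomial.leadingCoeff, hdeg] at this
          simpa [hcP] using this
        simp [hcoeff]
      · intro j hj hjn
        have : 0 < n - j := Nat.sub_pos_of_lt (lt_of_le_of_ne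
          (Nat.lt_succ_iff.mp (Finset.mem_range.mp hj)) hjn)
        rw [zero_pow this.ne']
        ring
      · intro hne
        exact absurd (Finset.self_mem_range_succ n) hne
    rw [← h0, hPQ, h0']
  -- conclude charpoly of (1/2)•B is X^n
  have hch : ((1/2 : ℂ) • B).charpoly = X^n := by
    apply Polynomial.funext
    intro z
    rw [eval_charpoly', Polynomial.eval_pow, Polynomial.eval_X]
    have := key (z/2)
    rw [mul_div_cancel₀ _ (two_ne_zero)] at this
    exact this
  have hnil : ((1/2 : ℂ) • B)^n = 0 := by
    have hCH := Matrix.aeval_self_charpoly ((1/2 : ℂ) • B)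
    rw [hch] at hCH
    simpa using hCH
  have : B = (2 : ℂ) • ((1/2 : ℂ) • B) := by
    rw [smul_smul]; norm_num
  rw [this, _root_.smul_pow, hnil, smul_zero]
end

section
/- There exists a 5×5 nilpotent complex matrix B whose numerical range Λ_1(B) is the closed unit disk {z ∈ ℂ : |z| ≤ 1} but for which Tr(B² Bᴴ) = 1 ≠ 0, so that the pencil L_B(t) is not isospectral (the characteristic polynomial of L_B(t) is not independent of t ∈ ℝ). One such matrix is the matrix with rows (0,2,0,0,0), (0,0,0,0,0), (0,0,0,1,1), (0,0,0,0,1), (0,0,0,0,0). -/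
/-!
The numerical range of `B` is that of `[[0, 2], [0, 0]] ⊕ N` with `N` a nilpotent `3 × 3` block.
The first summand alone already fills the closed unit disk, witnessed by `x = (a, b, 0, 0, 0)`
with `|a|² + |b|² = 1` and `2 ā b = z`; conversely AM–GM bounds the whole quadratic form
`2 x̄₀ x₁ + x̄₂ x₃ + x̄₂ x₄ + x̄₃ x₄` by `‖x‖²`.

Since `L_B(π) = -L_B(0)`, in odd dimension isospectrality forces
`det (Re B) = det (-Re B) = -det (Re B)`, i.e. `det (Re B) = 0`; here `det (Re B) = -1/4`.
-/

open Matrix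

/-- The rank-`k` numerical range `Λ_k(B)`. -/
noncomputable def rankNumRange {n : ℕ} (B : Matrix (Fin n) (Fin n) ℂ) (k : ℕ) : Set ℂ :=
  {lam : ℂ | ∃ P : Matrix (Fin n) (Fin n) ℂ,
    Pᴴ = P ∧ P * P = P ∧ P.rank = k ∧ P * B * P = lam • P}

theorem Matrix.rank_eq_zero_iff {m n K : Type*} [Fintype n] [Field K]
    {A : Matrix m n K} : A.rank = 0 ↔ A = 0 := by
  classical
  rw [Matrix.rank, Submodule.finrank_eq_zero, LinearMap.range_eq_bot, ← Matrix.toLin'_apply',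
    LinearEquiv.map_eq_zero_iff]

section NumericalRange

variable {ι : Type*} [Fintype ι] {n : ℕ}

def numRange (B : Matrix (Fin n) (Fin n) ℂ) : Set ℂ :=
  {z | ∃ x : Fin n → ℂ, star x ⬝ᵥ x = 1 ∧ star x ⬝ᵥ B *ᵥ x = z}

theorem dotProduct_star_self_eq_sum_norm_sq (x : ι → ℂ) :
    star x ⬝ᵥ x = ((∑ i, ‖x i‖ ^ 2 : ℝ) : ℂ) := by
  push_cast
  exact Finset.sum_congr rfl fun i _ => Complex.conj_mul' (x i)

theorem rank_vecMulVec_star_self {x : ι → ℂ} (hx : x ≠ 0) :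
    (vecMulVec x (star x)).rank = 1 := by
  have hne : vecMulVec x (star x) ≠ 0 := vecMulVec_ne_zero hx (star_ne_zero.mpr hx)
  have := rank_vecMulVec_le x (star x)
  have := mt Matrix.rank_eq_zero_iff.mp hne
  omega

theorem dotProduct_mulVec_mem_rankNumRange_one (B : Matrix (Fin n) (Fin n) ℂ)
    {x : Fin n → ℂ} (hx : star x ⬝ᵥ x = 1) : star x ⬝ᵥ B *ᵥ x ∈ rankNumRange B 1 := by
  have hx0 : x ≠ 0 := by rintro rfl; simp at hx
  refine ⟨vecMulVec x (star x), by rw [conjTranspose_vecMulVec, star_star], ?_,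
    rank_vecMulVec_star_self hx0, ?_⟩
  · rw [vecMulVec_mul_vecMulVec, hx, one_smul]
  · rw [vecMulVec_mul, vecMulVec_mul_vecMulVec, ← dotProduct_mulVec, vecMulVec_smul]

theorem exists_ne_zero_dotProduct_mulVec_eq_of_mem_rankNumRange {B : Matrix (Fin n) (Fin n) ℂ}
    {k : ℕ} (hk : k ≠ 0) {z : ℂ} (hz : z ∈ rankNumRange B k) :
    ∃ y : Fin n → ℂ, y ≠ 0 ∧ star y ⬝ᵥ B *ᵥ y = z * (star y ⬝ᵥ y) := by
  obtain ⟨P, hself, hidem, hrank, hPBP⟩ := hz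
  have hP : P ≠ 0 := by rintro rfl; exact hk (hrank ▸ rank_zero)
  obtain ⟨v, hv⟩ : ∃ v, P *ᵥ v ≠ 0 := by
    by_contra! h
    exact hP (Matrix.toLin'.injective (LinearMap.ext fun v => by simpa using h v))
  -- a nonzero vector in the range of `P` is fixed by `P` on both sides
  set y := P *ᵥ v
  have hPy : P *ᵥ y = y := by rw [mulVec_mulVec, hidem]
  have hyP : star y ᵥ* P = star y := by
    rw [star_mulVec, hself, vecMul_vecMul, hidem]
  refine ⟨y, hv, ?_⟩
  calc star y ⬝ᵥ B *ᵥ y = star y ᵥ* P ⬝ᵥ B *ᵥ (P *ᵥ y) := by rw [hPy, hyP]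
    _ = star y ⬝ᵥ (P * B * P) *ᵥ y := by
      rw [← dotProduct_mulVec, mulVec_mulVec, mulVec_mulVec, Matrix.mul_assoc]
    _ = z * (star y ⬝ᵥ y) := by rw [hPBP, smul_mulVec, hPy, dotProduct_smul, smul_eq_mul]

theorem exists_mem_numRange_of_dotProduct_mulVec_eq {B : Matrix (Fin n) (Fin n) ℂ} {z : ℂ}
    {y : Fin n → ℂ} (hy : y ≠ 0) (hyz : star y ⬝ᵥ B *ᵥ y = z * (star y ⬝ᵥ y)) :
    z ∈ numRange B := by
  set c : ℝ := ∑ i, ‖y i‖ ^ 2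
  have hc : 0 < c := by
    obtain ⟨i, hi⟩ := Function.ne_iff.mp hy
    exact Finset.sum_pos' (fun i _ => by positivity) ⟨i, Finset.mem_univ _, by positivity⟩
  obtain ⟨t, ht⟩ : ∃ t : ℂ, star t * t * (star y ⬝ᵥ y) = 1 := by
    refine ⟨((Real.sqrt c)⁻¹ : ℝ), ?_⟩
    rw [dotProduct_star_self_eq_sum_norm_sq, Complex.star_def, Complex.conj_ofReal]
    norm_cast
    rw [← mul_inv, Real.mul_self_sqrt hc.le, inv_mul_cancel₀ hc.ne']
  refine ⟨t • y, ?_, ?_⟩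
  · simp only [star_smul, smul_dotProduct, dotProduct_smul, smul_eq_mul]
    linear_combination ht
  · simp only [star_smul, mulVec_smul, smul_dotProduct, dotProduct_smul, smul_eq_mul, hyz]
    linear_combination z * ht

theorem rankNumRange_one_eq_numRange (B : Matrix (Fin n) (Fin n) ℂ) :
    rankNumRange B 1 = numRange B := by
  ext z
  constructor
  · intro hz
    obtain ⟨y, hy, hyz⟩ := exists_ne_zero_dotProduct_mulVec_eq_of_mem_rankNumRange one_ne_zero hz
    exact exists_mem_numRange_of_dotProduct_mulVec_eq hy hyz
  · rintro ⟨x, hx, rfl⟩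
    exact dotProduct_mulVec_mem_rankNumRange_one B hx

end NumericalRange

section Pencil

variable {n : ℕ}

theorem LB_zero (B : Matrix (Fin n) (Fin n) ℂ) : LB B 0 = reM B := by
  simp [LB]

theorem LB_pi (B : Matrix (Fin n) (Fin n) ℂ) : LB B Real.pi = -reM B := by
  simp [LB]

theorem Isospectral.det_reM_eq_zero (hn : Odd n) {B : Matrix (Fin n) (Fin n) ℂ}
    (h : Isospectral B) : (reM B).det = 0 := by
  have hdet : (reM B).det = (-reM B).det := by
    rw [det_eq_sign_charpoly_coeff, det_eq_sign_charpoly_coeff, ← LB_pi, ← LB_zero, h]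
  rw [det_neg, Fintype.card_fin, hn.neg_one_pow, neg_one_mul] at hdet
  exact CharZero.eq_neg_self_iff.mp hdet

end Pencil

def counterexample : Matrix (Fin 5) (Fin 5) ℂ :=
  !![0, 2, 0, 0, 0;
     0, 0, 0, 0, 0;
     0, 0, 0, 1, 1;
     0, 0, 0, 0, 1;
     0, 0, 0, 0, 0]

theorem counterexample_sq : counterexample * counterexample = single 2 4 1 := by
  ext i j
  fin_cases i <;> fin_cases j <;> simp [counterexample, mul_apply, Fin.sum_univ_five]

theorem counterexample_pow_three : counterexample ^ 3 = 0 := by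
  ext i j
  rw [pow_succ, sq, counterexample_sq]
  fin_cases i <;> fin_cases j <;> simp [counterexample, single_apply, mul_apply]

theorem trace_counterexample_sq_mul_conjTranspose :
    (counterexample * counterexample * counterexampleᴴ).trace = 1 := by
  rw [counterexample_sq, trace_single_mul]
  simp [counterexample]

theorem det_reM_counterexample : (reM counterexample).det = -1 / 4 := by
  have hsum : counterexample + counterexampleᴴ =
      !![0, 2, 0, 0, 0; 2, 0, 0, 0, 0; 0, 0, 0, 1, 1; 0, 0, 1, 0, 1; 0, 0, 1, 1, 0] := by
    ext i j
    fin_cases i <;> fin_cases j <;> simp [counterexample]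
  rw [reM, det_smul, hsum]
  simp [det_succ_row_zero, Fin.sum_univ_succ, Fin.succAbove]
  norm_num

theorem exists_two_mul_star_mul_eq_of_norm_le_one {z : ℂ} (hz : ‖z‖ ≤ 1) :
    ∃ a b : ℂ, star a * a + star b * b = 1 ∧ 2 * (star a * b) = z := by
  set s := Real.sqrt (1 - ‖z‖ ^ 2)
  have hs : s ^ 2 = 1 - ‖z‖ ^ 2 := Real.sq_sqrt (by nlinarith [norm_nonneg z])
  have hs0 : 0 ≤ s := Real.sqrt_nonneg _
  set a := Real.sqrt ((1 + s) / 2)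
  have ha : a ^ 2 = (1 + s) / 2 := Real.sq_sqrt (by linarith)
  have ha0 : (a : ℂ) ≠ 0 := by exact_mod_cast (Real.sqrt_pos.mpr (by linarith)).ne'
  refine ⟨a, z / (2 * a), ?_, ?_⟩
  · have ha' : 0 < a := Real.sqrt_pos.mpr (by linarith)
    rw [Complex.star_def, Complex.conj_mul', Complex.conj_mul', norm_div,
      norm_mul, Complex.norm_real, Real.norm_of_nonneg ha'.le, Complex.norm_two]
    norm_cast
    field_simp
    nlinarith
  · rw [Complex.star_def, Complex.conj_ofReal]
    field_simp

theorem dotProduct_counterexample_mulVec (y : Fin 5 → ℂ) :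
    star y ⬝ᵥ counterexample *ᵥ y =
      2 * (star (y 0) * y 1) + star (y 2) * y 3 + star (y 2) * y 4 + star (y 3) * y 4 := by
  simp [counterexample, dotProduct, mulVec, Fin.sum_univ_five]
  ring

theorem norm_dotProduct_counterexample_mulVec_le (y : Fin 5 → ℂ) :
    ‖star y ⬝ᵥ counterexample *ᵥ y‖ ≤ ∑ i, ‖y i‖ ^ 2 := by
  rw [dotProduct_counterexample_mulVec, Fin.sum_univ_five]
  calc _ ≤ 2 * (‖y 0‖ * ‖y 1‖) + ‖y 2‖ * ‖y 3‖ + ‖y 2‖ * ‖y 4‖ + ‖y 3‖ * ‖y 4‖ := by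
        refine norm_add₄_le.trans_eq ?_
        simp
    _ ≤ _ := by
      nlinarith [sq_nonneg (‖y 0‖ - ‖y 1‖), sq_nonneg (‖y 2‖ - ‖y 3‖),
        sq_nonneg (‖y 2‖ - ‖y 4‖), sq_nonneg (‖y 3‖ - ‖y 4‖)]

theorem numRange_counterexample : numRange counterexample = {z : ℂ | ‖z‖ ≤ 1} := by
  ext z
  constructor
  · rintro ⟨x, hx, rfl⟩
    rw [dotProduct_star_self_eq_sum_norm_sq, ← Complex.ofReal_one, Complex.ofReal_inj] at hx
    exact hx ▸ norm_dotProduct_counterexample_mulVec_le x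
  · intro hz
    obtain ⟨a, b, hab, rfl⟩ := exists_two_mul_star_mul_eq_of_norm_le_one hz
    refine ⟨![a, b, 0, 0, 0], ?_, ?_⟩
    · simpa [dotProduct, Fin.sum_univ_five] using hab
    · simp [dotProduct_counterexample_mulVec]

/-- there is a nilpotent `5 × 5` matrix (an explicit one is given) whose
numerical range is the closed unit disk, yet `Tr(B² Bᴴ) = 1 ≠ 0` and the pencil `L_B(t)`
is not isospectral. -/
theorem exists_nilpotent_unit_disk_not_isospectral :
    ∃ B : Matrix (Fin 5) (Fin 5) ℂ,
      B = !![0, 2, 0, 0, 0;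
             0, 0, 0, 0, 0;
             0, 0, 0, 1, 1;
             0, 0, 0, 0, 1;
             0, 0, 0, 0, 0] ∧
      B ^ 5 = 0 ∧
      rankNumRange B 1 = {z : ℂ | ‖z‖ ≤ 1} ∧
      (B * B * Bᴴ).trace = 1 ∧ (1 : ℂ) ≠ 0 ∧
      ¬ Isospectral B := by
  refine ⟨counterexample, rfl, pow_eq_zero_of_le (by norm_num) counterexample_pow_three,
    ?_, trace_counterexample_sq_mul_conjTranspose, one_ne_zero, fun h => ?_⟩
  · rw [rankNumRange_one_eq_numRange, numRange_counterexample]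
  · have hdet := h.det_reM_eq_zero (by decide)
    rw [det_reM_counterexample] at hdet
    norm_num at hdet
end

section
/- Let B be an n×n complex matrix and suppose that for every t ∈ ℝ there exists a unitary matrix U with e^{it} B = U B Uᴴ. Then for every word w : Fin k → Bool in which the number of appearances of B differs from the number of appearances of Bᴴ (i.e. the number of indices with w j = false differs from the number with w j = true), one has Tr(w(B,Bᴴ)) = 0. -/
open Matrix

noncomputable def listProd {n : ℕ} (B : Matrix (Fin n) (Fin n) ℂ) (l : List Bool) :
    Matrix (Fin n) (Fin n) ℂ :=
  (l.map fun b => if b then Bᴴ else B).prod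

lemma listProd_smul {n : ℕ} (B : Matrix (Fin n) (Fin n) ℂ) (c : ℂ) (l : List Bool) :
    listProd (c • B) l
      = (c ^ l.count false * (starRingEnd ℂ c) ^ l.count true) • listProd B l := by
  induction l with
  | nil => simp [listProd]
  | cons b t ih =>
    simp only [listProd, List.map_cons, List.prod_cons] at ih ⊢
    rw [ih]
    cases b <;>
      simp [List.count_cons, Matrix.smul_mul, Matrix.mul_smul, smul_smul,
        conjTranspose_smul, pow_succ] <;> ring_nf

lemma listProd_conj {n : ℕ} (B U : Matrix (Fin n) (Fin n) ℂ) (hU : U * Uᴴ = 1)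
    (l : List Bool) : listProd (U * B * Uᴴ) l = U * listProd B l * Uᴴ := by
  have hU' : Uᴴ * U = 1 := mul_eq_one_comm.mp hU
  induction l with
  | nil => simpa [listProd] using hU.symm
  | cons b t ih =>
    simp only [listProd, List.map_cons, List.prod_cons] at ih ⊢
    rw [ih]
    cases b <;>
      simp only [if_true, if_false, Bool.false_eq_true, conjTranspose_mul,
        conjTranspose_conjTranspose, Matrix.mul_assoc] <;>
      rw [← Matrix.mul_assoc Uᴴ U, hU', Matrix.one_mul]

lemma card_filter_eq_count {k : ℕ} (w : Fin k → Bool) (c : Bool) :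
    (Finset.univ.filter fun j => w j = c).card = (List.ofFn w).count c := by
  induction k with
  | zero => simp
  | succ k ih =>
    rw [List.ofFn_succ, List.count_cons]
    simp only [Finset.card_filter, Fin.sum_univ_succ]
    rw [← Finset.card_filter, ih (fun j => w j.succ)]
    rcases Bool.eq_false_or_eq_true (w 0) with h | h <;>
      rcases Bool.eq_false_or_eq_true c with hc | hc <;>
        simp [h, hc, add_comm, beq_iff_eq]


/-- if `e^{it} B` is unitarily similar to `B` for every `t`, then every word
in `B, Bᴴ` with an unequal number of appearances of `B` and `Bᴴ` has zero trace. -/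
theorem unitary_rotation_implies_unbalanced_word_traces_zero (n : ℕ)
    (B : Matrix (Fin n) (Fin n) ℂ)
    (h : ∀ t : ℝ, ∃ U : Matrix (Fin n) (Fin n) ℂ,
      U * Uᴴ = 1 ∧ Complex.exp (Complex.I * t) • B = U * B * Uᴴ) :
    ∀ (k : ℕ) (w : Fin k → Bool),
      (Finset.univ.filter fun j => w j = false).card ≠
        (Finset.univ.filter fun j => w j = true).card →
      (wordProd B w).trace = 0 := by
  intro k w hne
  set l : List Bool := List.ofFn w with hl
  have hwp : wordProd B w = listProd B l := by
    rw [wordProd, listProd, hl, List.map_ofFn]; rfl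
  rw [hwp]
  set a : ℕ := l.count false
  set b : ℕ := l.count true
  have hab : a ≠ b := by
    rwa [card_filter_eq_count, card_filter_eq_count] at hne
  set m : ℤ := (a : ℤ) - b with hm
  have hm0 : (m : ℝ) ≠ 0 := by
    have hz : m ≠ 0 := sub_ne_zero.mpr (fun hh => hab (by exact_mod_cast hh))
    exact_mod_cast hz
  set t : ℝ := Real.pi / (m : ℝ) with ht
  obtain ⟨U, hU, hBU⟩ := h t
  have hU' : Uᴴ * U = 1 := mul_eq_one_comm.mp hU
  set c : ℂ := Complex.exp (Complex.I * t) with hc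
  set T : ℂ := (listProd B l).trace with hT
  have key : ((c ^ a * (starRingEnd ℂ c) ^ b) : ℂ) * T = T := by
    have h1 : listProd (c • B) l = U * listProd B l * Uᴴ := by
      rw [hc, hBU]; exact listProd_conj B U hU l
    have h2 := congrArg Matrix.trace h1
    rw [listProd_smul, trace_smul, smul_eq_mul] at h2
    rw [h2, trace_mul_cycle, hU', Matrix.one_mul]
  have hscal : (c ^ a * (starRingEnd ℂ c) ^ b : ℂ) = -1 := by
    have hconj : starRingEnd ℂ c = Complex.exp (-(Complex.I * t)) := by
      rw [hc, ← Complex.exp_conj, _root_.map_mul, Complex.conj_I, Complex.conj_ofReal, neg_mul]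
    rw [hconj, hc, ← Complex.exp_nat_mul, ← Complex.exp_nat_mul, ← Complex.exp_add,
      ← Complex.exp_pi_mul_I]
    congr 1
    have : (t : ℂ) * m = (Real.pi : ℂ) := by
      have hmC : (m : ℂ) ≠ 0 := by exact_mod_cast hm0
      rw [ht]
      push_cast
      field_simp
    push_cast [hm] at this ⊢
    ring_nf
    ring_nf at this
    linear_combination Complex.I * this
  rw [hscal] at key
  linear_combination (-1/2 : ℂ) * key
end

section
/- Let B be an n×n complex matrix and suppose there exists a skew-adjoint matrix K (Kᴴ = −K) satisfying KB − BK = −iB. Then for every t ∈ ℝ there exists a unitary matrix U with e^{it} B = U B Uᴴ. -/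
/-!
The relation `[K, B] = -iB` says `K B = B (K - i)`, so `B` intertwines `K - i` with `K`, hence
`exp (sK) B = e^{-is} B exp (sK)` for every scalar `s`. For real `s` the matrix `sK` is
skew-adjoint, so `U = exp (-tK)` is unitary and `U B Uᴴ = e^{it} B`.
-/

open Matrix NormedSpace

theorem exp_mul_eq_smul_mul_exp_of_commutator_eq_smul {𝕂 𝔸 : Type*} [RCLike 𝕂] [NormedRing 𝔸]
    [NormedAlgebra ℚ 𝔸] [NormedAlgebra 𝕂 𝔸] [CompleteSpace 𝔸] {K B : 𝔸} {c : 𝕂}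
    (h : K * B - B * K = c • B) : exp K * B = exp c • (B * exp K) := by
  have hsemi : SemiconjBy B (K + algebraMap 𝕂 𝔸 c) K := by
    rw [SemiconjBy, mul_add, ← Algebra.commutes, ← Algebra.smul_def, ← h]
    abel
  have hcomm : Commute K (algebraMap 𝕂 𝔸 c) := (Algebra.commutes c K).symm
  rw [← hsemi.exp_right.eq, exp_add_of_commute hcomm, ← algebraMap_exp_comm, ← mul_assoc,
    ← Algebra.commutes, Algebra.smul_def]

theorem Matrix.exp_mul_eq_smul_mul_exp_of_commutator_eq_smul {𝕂 m : Type*} [RCLike 𝕂]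
    [Fintype m] [DecidableEq m] {K B : Matrix m m 𝕂} {c : 𝕂} (h : K * B - B * K = c • B) :
    exp K * B = exp c • (B * exp K) :=
  open scoped Norms.Operator in _root_.exp_mul_eq_smul_mul_exp_of_commutator_eq_smul h

theorem Matrix.exp_mem_unitary_of_mem_skewAdjoint {m 𝔸 : Type*} [Fintype m] [DecidableEq m]
    [NormedRing 𝔸] [NormedAlgebra ℚ 𝔸] [CompleteSpace 𝔸] [StarRing 𝔸] [ContinuousStar 𝔸]
    {A : Matrix m m 𝔸} (h : A ∈ skewAdjoint (Matrix m m 𝔸)) : exp A ∈ unitary (Matrix m m 𝔸) := by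
  rw [Unitary.mem_iff, star_eq_conjTranspose, ← Matrix.exp_conjTranspose, ← star_eq_conjTranspose,
    skewAdjoint.mem_iff.mp h, ← Matrix.exp_add_of_commute _ _ (Commute.refl A).neg_left,
    ← Matrix.exp_add_of_commute _ _ (Commute.refl A).neg_right, neg_add_cancel, add_neg_cancel,
    exp_zero, and_self]

/-- if there is a skew-adjoint `K` with `[K, B] = -iB`, then `e^{it} B` is
unitarily similar to `B` for every `t`. -/
theorem skew_commutator_implies_unitary_rotation (n : ℕ) (B : Matrix (Fin n) (Fin n) ℂ)
    (h : ∃ K : Matrix (Fin n) (Fin n) ℂ, Kᴴ = -K ∧ K * B - B * K = (-Complex.I) • B) :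
    ∀ t : ℝ, ∃ U : Matrix (Fin n) (Fin n) ℂ,
      U * Uᴴ = 1 ∧ Complex.exp (Complex.I * t) • B = U * B * Uᴴ := by
  obtain ⟨K, hK, hKB⟩ := h
  intro t
  have hunitary : exp ((-t) • K) ∈ unitary (Matrix (Fin n) (Fin n) ℂ) :=
    Matrix.exp_mem_unitary_of_mem_skewAdjoint
      (skewAdjoint.smul_mem _ (skewAdjoint.mem_iff.mpr hK))
  have hcomm : (-t) • K * B - B * ((-t) • K) = (Complex.I * t) • B := by
    rw [smul_mul_assoc, mul_smul_comm, ← smul_sub, hKB, ← Complex.coe_smul, smul_smul]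
    push_cast
    ring_nf
  refine ⟨exp ((-t) • K), Unitary.mul_star_self_of_mem hunitary, ?_⟩
  rw [Matrix.exp_mul_eq_smul_mul_exp_of_commutator_eq_smul hcomm, smul_mul_assoc, mul_assoc,
    ← star_eq_conjTranspose, Unitary.mul_star_self_of_mem hunitary, mul_one, Complex.exp_eq_exp_ℂ]
end

section
/- Let B be an n×n complex matrix and suppose there exist a unitary matrix U and a function d : Fin n → ℤ such that every nonzero entry of C := U B Uᴴ satisfies d(k) = d(j) + 1 whenever C_{jk} ≠ 0 (i.e. C has nonzero entries only where the value of d increases by exactly 1 from row index to column index). Then there exists a skew-adjoint matrix K (Kᴴ = −K) satisfying KB − BK = −iB; one may take K = Uᴴ D U where D is the diagonal matrix with entries D_{jj} = i·d(j). -/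
open Matrix

/-- if `U` is unitary and `d : Fin n → ℤ` is such that every nonzero entry
of `C = U B Uᴴ` satisfies `d k = d j + 1`, then `K = Uᴴ D U`, with `D` the diagonal matrix
with entries `i ⬝ d j`, is skew-adjoint and satisfies `KB - BK = -iB`. -/
theorem block_superdiagonal_implies_skew_commutator (n : ℕ)
    (B U : Matrix (Fin n) (Fin n) ℂ) (d : Fin n → ℤ)
    (hU : U * Uᴴ = 1)
    (hd : ∀ j k : Fin n, (U * B * Uᴴ) j k ≠ 0 → d k = d j + 1) :
    ∃ K : Matrix (Fin n) (Fin n) ℂ,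
      K = Uᴴ * Matrix.diagonal (fun j => Complex.I * (d j : ℂ)) * U ∧
      Kᴴ = -K ∧ K * B - B * K = (-Complex.I) • B := by
  have hU' : Uᴴ * U = 1 := mul_eq_one_comm.mp hU
  set D : Matrix (Fin n) (Fin n) ℂ :=
    Matrix.diagonal (fun j => Complex.I * (d j : ℂ)) with hDdef
  set C : Matrix (Fin n) (Fin n) ℂ := U * B * Uᴴ with hCdef
  have hDH : Dᴴ = -D := by
    rw [hDdef, Matrix.diagonal_conjTranspose]
    ext j k
    rcases eq_or_ne j k with h | h <;>
      simp [Matrix.diagonal_apply, h, Complex.ext_iff]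
  have hB : B = Uᴴ * C * U := by
    rw [hCdef]
    calc B = (Uᴴ * U) * B * (Uᴴ * U) := by rw [hU']; simp
    _ = Uᴴ * (U * B * Uᴴ) * U := by noncomm_ring
  have hkey : D * C - C * D = (-Complex.I) • C := by
    ext j k
    simp only [Matrix.sub_apply, Matrix.smul_apply, hDdef,
      Matrix.diagonal_mul, Matrix.mul_diagonal, smul_eq_mul]
    by_cases h : C j k = 0
    · rw [h]; ring
    · have := hd j k h
      rw [this]
      push_cast
      ring
  refine ⟨Uᴴ * D * U, rfl, ?_, ?_⟩
  · simp only [Matrix.conjTranspose_mul, Matrix.conjTranspose_conjTranspose, hDH]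
    noncomm_ring
  · calc Uᴴ * D * U * B - B * (Uᴴ * D * U)
        = Uᴴ * D * U * (Uᴴ * C * U) - (Uᴴ * C * U) * (Uᴴ * D * U) := by rw [← hB]
    _ = Uᴴ * (D * (U * Uᴴ) * C) * U - Uᴴ * (C * (U * Uᴴ) * D) * U := by noncomm_ring
    _ = Uᴴ * (D * C - C * D) * U := by rw [hU]; noncomm_ring
    _ = (-Complex.I) • (Uᴴ * C * U) := by rw [hkey, Matrix.mul_smul, Matrix.smul_mul]
    _ = (-Complex.I) • B := by rw [← hB]
end

section
/- Let U : ℝ → M_n(ℂ) be differentiable with U(0) = I, let P : ℝ → M_n(ℂ) satisfy U′(t) = P(t) U(t) for all t ∈ ℝ, and suppose P(t) is skew-adjoint (P(t)ᴴ = −P(t)) for every t. Then U(t) is unitary (U(t) U(t)ᴴ = I) for every t ∈ ℝ. -/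
open Matrix

attribute [local instance] Matrix.normedAddCommGroup Matrix.normedSpace

/-!
If `U' = P U` with `P` skew-adjoint, then `(Uᴴ U)' = (P U)ᴴ U + Uᴴ P U = Uᴴ (Pᴴ + P) U = 0`,
so `Uᴴ U` stays equal to its value `I` at `0`; for square matrices a left inverse is a
two-sided inverse, hence `U Uᴴ = I`.
-/

theorem star_mul_add_star_mul_eq_zero_of_skewAdjoint {A : Type*} [NonUnitalRing A] [StarRing A]
    {p u : A} (hp : star p = -p) : star (p * u) * u + star u * (p * u) = 0 := by
  rw [star_mul, hp, mul_assoc, neg_mul, mul_neg, neg_add_cancel]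

section NormedStarAlgebra

variable {A : Type*} [NormedRing A] [NormedAlgebra ℝ A] [StarRing A] [ContinuousStar A]
  [StarModule ℝ A]

theorem HasDerivAt.star_mul_self {u : ℝ → A} {u' : A} {t : ℝ} (hu : HasDerivAt u u' t) :
    HasDerivAt (fun s => star (u s) * u s) (star u' * u t + star (u t) * u') t :=
  hu.star.mul hu

theorem star_mul_self_eq_of_hasDerivAt_skewAdjoint_mul {u p : ℝ → A}
    (hu : ∀ t, HasDerivAt u (p t * u t) t) (hp : ∀ t, star (p t) = -p t) (s t : ℝ) :
    star (u s) * u s = star (u t) * u t := by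
  have hderiv : ∀ t, HasDerivAt (fun s => star (u s) * u s) 0 t := fun t => by
    simpa only [star_mul_add_star_mul_eq_zero_of_skewAdjoint (u := u t) (hp t)] using
      (hu t).star_mul_self
  exact is_const_of_deriv_eq_zero (fun t => (hderiv t).differentiableAt)
    (fun t => (hderiv t).deriv) s t

end NormedStarAlgebra

theorem Matrix.conjTranspose_mul_self_eq_of_hasDerivAt_skewAdjoint_mul {m 𝕜 : Type*}
    [Fintype m] [DecidableEq m] [RCLike 𝕜] {u p : ℝ → Matrix m m 𝕜}
    (hu : ∀ t, HasDerivAt u (p t * u t) t) (hp : ∀ t, (p t)ᴴ = -p t) (s t : ℝ) :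
    (u s)ᴴ * u s = (u t)ᴴ * u t := by
  -- `HasDerivAt` only depends on the topology, so any algebra norm on matrices may be used.
  let _ : NormedRing (Matrix m m 𝕜) := Matrix.linftyOpNormedRing
  let _ : NormedAlgebra ℝ (Matrix m m 𝕜) := Matrix.linftyOpNormedAlgebra
  exact @star_mul_self_eq_of_hasDerivAt_skewAdjoint_mul _ _ _ _
    ⟨continuous_id.matrix_conjTranspose⟩ _ u p hu hp s t

/-- if `U'(t) = P(t) U(t)` with `U(0) = I` and each `P(t)` skew-adjoint,
then `U(t)` is unitary for every `t`. -/
theorem unitary_of_skew_adjoint_generator (n : ℕ)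
    (U P : ℝ → Matrix (Fin n) (Fin n) ℂ)
    (hU0 : U 0 = 1)
    (hU : ∀ t : ℝ, HasDerivAt U (P t * U t) t)
    (hP : ∀ t : ℝ, (P t)ᴴ = -(P t)) :
    ∀ t : ℝ, U t * (U t)ᴴ = 1 := by
  intro t
  have hisometry : (U t)ᴴ * U t = 1 := by
    simpa [hU0] using conjTranspose_mul_self_eq_of_hasDerivAt_skewAdjoint_mul hU hP t 0
  exact mul_eq_one_comm.mp hisometry
end
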